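/- Let 𝒞 ⊆ ℝ^d be open and 𝒟 = {q₁,…,q_r} a sufficient decision dataset for 𝒞 and 𝒳, and let c ∈ 𝒞. Then there exists κ > 0 such that for every ε = (ε₁,…,ε_r) ∈ ℝ^r with Euclidean norm ‖ε‖ < κ, setting o_i = c⊤q_i + ε_i for i ∈ {1,…,r}, every ĉ ∈ argmin_{c'∈𝒞} Σ_{i=1}^r (c'⊤q_i − o_i)² satisfies argmin_{x∈𝒳} ĉ⊤x ⊆ argmin_{x∈𝒳} c⊤x. -/

import Mathlib

open scoped RealInnerProductSpace

noncomputable section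

abbrev Vec (d : ℕ) := EuclideanSpace ℝ (Fin d)

/-- The feasible set 𝒳 = {x : Ax = b, x ≥ 0}. -/
def feasibleSet {d m : ℕ} (A : Matrix (Fin m) (Fin d) ℝ) (b : Fin m → ℝ) : Set (Vec d) :=
  {x | A.mulVec x = b ∧ ∀ i, 0 ≤ x i}

/-- argmin_{x ∈ X} c⊤x. -/
def argminSet {d : ℕ} (X : Set (Vec d)) (c : Vec d) : Set (Vec d) :=
  {x | x ∈ X ∧ ∀ y ∈ X, ⟪c, x⟫ ≤ ⟪c, y⟫}

/-- 𝒟 = {q 1, …, q N} is a sufficient decision dataset for 𝒞 and 𝒳. -/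
def SufficientDataset {d N : ℕ} (C : Set (Vec d)) (X : Set (Vec d)) (q : Fin N → Vec d) : Prop :=
  ∃ Xhat : (Fin N → ℝ) → Set (Vec d),
    ∀ c ∈ C, Xhat (fun i => ⟪c, q i⟫) = argminSet X c

/-- Extreme points of X. -/
def extremePts {d : ℕ} (X : Set (Vec d)) : Set (Vec d) :=
  {x | x ∈ X ∧ ¬ ∃ (l : ℝ) (y z : Vec d), y ∈ X ∧ z ∈ X ∧ y ≠ z ∧
    l ∈ Set.Ioo (0:ℝ) 1 ∧ x = l • y + (1 - l) • z}

/-- Feasible directions from x in X. -/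
def FD {d : ℕ} (X : Set (Vec d)) (x : Vec d) : Set (Vec d) :=
  {δ | ∃ ε : ℝ, 0 < ε ∧ x + ε • δ ∈ X}

/-- Extreme directions of FD(x). -/
def extremeDirs {d : ℕ} (X : Set (Vec d)) (x : Vec d) : Set (Vec d) :=
  {δ | δ ∈ FD X x ∧ δ ≠ 0 ∧ ¬ ∃ (l : ℝ) (δ₁ δ₂ : Vec d), δ₁ ∈ FD X x ∧ δ₂ ∈ FD X x ∧
    (∀ t : ℝ, δ₁ ≠ t • δ₂) ∧ l ∈ Set.Ioo (0:ℝ) 1 ∧ δ = l • δ₁ + (1 - l) • δ₂}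

/-- Optimality cone Λ(x). -/
def Lam {d : ℕ} (X : Set (Vec d)) (x : Vec d) : Set (Vec d) :=
  {c | x ∈ argminSet X c}

/-- The face F(x, δ) = Λ(x) ∩ {δ}^⊥. -/
def faceF {d : ℕ} (X : Set (Vec d)) (x δ : Vec d) : Set (Vec d) :=
  Lam X x ∩ {c | ⟪c, δ⟫ = 0}

/-- Relevant extreme directions Δ(𝒳, 𝒞). -/
def DeltaSet {d : ℕ} (X C : Set (Vec d)) : Set (Vec d) :=
  {δ | ∃ x ∈ extremePts X, δ ∈ extremeDirs X x ∧ (faceF X x δ ∩ C).Nonempty}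

/-- F₀: the span of the canonical basis vectors eᵢ with xᵢ ≠ 0 for some x ∈ X. -/
def F0 {d : ℕ} (X : Set (Vec d)) : Submodule ℝ (Vec d) :=
  Submodule.span ℝ {v | ∃ i : Fin d, (∃ x ∈ X, x i ≠ 0) ∧ v = EuclideanSpace.single i 1}

/-- Ker A as a submodule of ℝ^d. -/
def kerA {d m : ℕ} (A : Matrix (Fin m) (Fin d) ℝ) : Submodule ℝ (Vec d) :=
  LinearMap.ker ((Matrix.mulVecLin A).comp (WithLp.linearEquiv 2 ℝ (Fin d → ℝ)).toLinearMap)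

/-- Reachable optimal solutions 𝒳*(𝒞). -/
def reachable {d : ℕ} (X C : Set (Vec d)) : Set (Vec d) := ⋃ c ∈ C, argminSet X c

/-- dir(𝒳*(𝒞)) = span of differences of reachable solutions. -/
def dirSpan {d : ℕ} (X C : Set (Vec d)) : Submodule ℝ (Vec d) :=
  Submodule.span ℝ {v | ∃ x₁ ∈ reachable X C, ∃ x₂ ∈ reachable X C, v = x₁ - x₂}

/-- 𝒞-strong neighbors. -/
def StrongNeighbors {d : ℕ} (X C : Set (Vec d)) (x₁ x₂ : Vec d) : Prop :=
  x₂ - x₁ ∈ extremeDirs X x₁ ∧ ∃ c ∈ C, x₁ ∈ argminSet X c ∧ x₂ ∈ argminSet X c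

/-- Y is 𝒞-strongly connected by neighboring extreme points. -/
def StronglyConnected {d : ℕ} (X C Y : Set (Vec d)) : Prop :=
  ∀ x ∈ Y, ∀ x' ∈ Y, ∃ (h : ℕ) (seq : Fin (h + 1) → Vec d),
    (∀ i, seq i ∈ Y) ∧ seq 0 = x ∧ seq (Fin.last h) = x' ∧
    ∀ i : Fin h, StrongNeighbors X C (seq i.castSucc) (seq i.succ)


/-! ### Auxiliary lemmas -/

lemma mulVec_comb {d m : ℕ} (A : Matrix (Fin m) (Fin d) ℝ) (x w : Vec d) (s t : ℝ) :
    A.mulVec (s • x + t • w) = s • A.mulVec x + t • A.mulVec w := by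
  rw [Matrix.mulVec_add, Matrix.mulVec_smul, Matrix.mulVec_smul]

lemma extreme_support {d m : ℕ} {A : Matrix (Fin m) (Fin d) ℝ} {b : Fin m → ℝ} {x : Vec d}
    (hx : x ∈ Set.extremePoints ℝ (feasibleSet A b)) :
    ∀ w : Vec d, A.mulVec w = 0 → (∀ i, x i = 0 → w i = 0) → w = 0 := by
  intro w hAw hsupp
  by_contra hw
  have hxX := hx.1
  -- the set of coordinates where w ≠ 0
  have hs : (Finset.univ.filter (fun i => w i ≠ 0)).Nonempty := by
    by_contra h
    apply hw
    ext i
    by_contra hwi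
    exact h ⟨i, Finset.mem_filter.2 ⟨Finset.mem_univ i, hwi⟩⟩
  set s := Finset.univ.filter (fun i => w i ≠ 0) with hs_def
  set t : ℝ := s.inf' hs (fun i => x i / |w i|) with ht_def
  have hxpos : ∀ i ∈ s, 0 < x i := by
    intro i hi
    have hwi : w i ≠ 0 := (Finset.mem_filter.1 hi).2
    rcases lt_or_eq_of_le (hxX.2 i) with h | h
    · exact h
    · exact absurd (hsupp i h.symm) hwi
  have ht : 0 < t := by
    rw [ht_def]
    exact (Finset.lt_inf'_iff hs).2 fun i hi =>
      div_pos (hxpos i hi) (abs_pos.2 (Finset.mem_filter.1 hi).2)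
  have hbound : ∀ i, t * |w i| ≤ x i := by
    intro i
    by_cases hwi : w i = 0
    · simp [hwi]; exact hxX.2 i
    · have hmem : i ∈ s := Finset.mem_filter.2 ⟨Finset.mem_univ i, hwi⟩
      have : t ≤ x i / |w i| := Finset.inf'_le _ hmem
      calc t * |w i| ≤ (x i / |w i|) * |w i| := by
            apply mul_le_mul_of_nonneg_right this (abs_nonneg _)
        _ = x i := div_mul_cancel₀ _ (abs_ne_zero.2 hwi)
  have hmem : ∀ (sg : ℝ), |sg| = 1 → x + (sg * t) • w ∈ feasibleSet A b := by
    intro sg hsg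
    constructor
    · have := mulVec_comb A x w 1 (sg * t)
      rw [one_smul] at this
      simp only [WithLp.ofLp_add, WithLp.ofLp_smul]
      rw [this, hxX.1, hAw, smul_zero, add_zero, one_smul]
    · intro i
      have h1 : (x + (sg * t) • w) i = x i + (sg * t) * w i := rfl
      rw [h1]
      have : |(sg * t) * w i| = t * |w i| := by
        rw [abs_mul, abs_mul, hsg, one_mul, abs_of_pos ht]
      nlinarith [neg_abs_le ((sg * t) * w i), hbound i]
  have hy := hmem 1 (by norm_num)
  have hz := hmem (-1) (by norm_num)
  rw [one_mul] at hy
  rw [neg_one_mul] at hz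
  have hseg : x ∈ openSegment ℝ (x + t • w) (x + (-t) • w) := by
    refine ⟨1/2, 1/2, by norm_num, by norm_num, by norm_num, ?_⟩
    module
  have := hx.2 hy hz hseg
  have h0 : t • w = 0 := by
    have h1 := this
    have : x + t • w - x = 0 := by rw [h1]; abel
    simpa using this
  rcases smul_eq_zero.1 h0 with h | h
  · exact absurd h (ne_of_gt ht)
  · exact hw h

lemma extreme_finite {d m : ℕ} (A : Matrix (Fin m) (Fin d) ℝ) (b : Fin m → ℝ) :
    (Set.extremePoints ℝ (feasibleSet A b)).Finite := by
  have hinj : Set.InjOn (fun x : Vec d => {i : Fin d | x i ≠ 0})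
      (Set.extremePoints ℝ (feasibleSet A b)) := by
    intro x hx y hy hxy
    simp only [Set.ext_iff, Set.mem_setOf_eq] at hxy
    have hw : A.mulVec (x - y) = 0 := by
      have := mulVec_comb A x y 1 (-1)
      rw [one_smul, neg_one_smul, ← sub_eq_add_neg] at this
      rw [this, hx.1.1, hy.1.1]
      funext j; simp
    have hsupp : ∀ i, x i = 0 → (x - y) i = 0 := by
      intro i hxi
      have hyi : y i = 0 := by
        by_contra h
        exact ((hxy i).2 h) hxi
      have : (x - y) i = x i - y i := rfl
      rw [this, hxi, hyi, sub_zero]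
    have := extreme_support hx (x - y) hw hsupp
    exact sub_eq_zero.1 this
  exact Set.Finite.of_finite_image (Set.toFinite _) hinj

lemma feas_closed {d m : ℕ} (A : Matrix (Fin m) (Fin d) ℝ) (b : Fin m → ℝ) :
    IsClosed (feasibleSet A b) := by
  have hc : Continuous fun x : Vec d => A.mulVec x :=
    LinearMap.continuous_of_finiteDimensional
      ((Matrix.mulVecLin A).comp (WithLp.linearEquiv 2 ℝ (Fin d → ℝ)).toLinearMap)
  have : feasibleSet A b = {x : Vec d | A.mulVec x = b} ∩ ⋂ i, {x : Vec d | 0 ≤ x i} := by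
    ext x; simp [feasibleSet, Set.mem_iInter]
  rw [this]
  exact (isClosed_eq hc continuous_const).inter
    (isClosed_iInter fun i => isClosed_le continuous_const (by fun_prop))

lemma feas_convex {d m : ℕ} (A : Matrix (Fin m) (Fin d) ℝ) (b : Fin m → ℝ) :
    Convex ℝ (feasibleSet A b) := by
  intro x hx y hy a b' ha hb hab
  refine ⟨?_, fun i => ?_⟩
  · simp only [WithLp.ofLp_add, WithLp.ofLp_smul]
    rw [mulVec_comb, hx.1, hy.1, ← add_smul, hab, one_smul]
  · have : (a • x + b' • y) i = a * x i + b' * y i := rfl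
    rw [this]
    have := hx.2 i; have := hy.2 i; positivity

lemma stability {d m : ℕ} (A : Matrix (Fin m) (Fin d) ℝ) (b : Fin m → ℝ)
    (hne : (feasibleSet A b).Nonempty) (hbdd : Bornology.IsBounded (feasibleSet A b))
    (c : Vec d) :
    ∃ δ > (0:ℝ), ∀ c' : Vec d, ‖c' - c‖ < δ →
      argminSet (feasibleSet A b) c' ⊆ argminSet (feasibleSet A b) c := by
  set X := feasibleSet A b with hX
  have hcomp : IsCompact X := Metric.isCompact_of_isClosed_isBounded (feas_closed A b) hbdd
  have hEf : (Set.extremePoints ℝ X).Finite := extreme_finite A b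
  set V : Finset (Vec d) := hEf.toFinset with hV
  have hVX : ∀ v ∈ V, v ∈ X := fun v hv =>
    extremePoints_subset (hEf.mem_toFinset.1 hv)
  -- X is the convex hull of V
  have hhull : X = convexHull ℝ (V : Set (Vec d)) := by
    have h1 := closure_convexHull_extremePoints hcomp (feas_convex A b)
    have h2 : (V : Set (Vec d)) = Set.extremePoints ℝ X := hEf.coe_toFinset
    have h3 := (hEf.isCompact_convexHull ℝ).isClosed.closure_eq
    rw [h2, ← h3, h1]
  have hVne : V.Nonempty := by
    rcases hne with ⟨x, hx⟩
    by_contra h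
    rw [Finset.not_nonempty_iff_eq_empty] at h
    rw [h] at hhull
    simp only [Finset.coe_empty, convexHull_empty] at hhull
    rw [hhull] at hx
    exact hx
  -- combo representation
  have hcombo : ∀ x ∈ X, ∃ w : Vec d → ℝ, (∀ v ∈ V, 0 ≤ w v) ∧ ∑ v ∈ V, w v = 1 ∧
      ∑ v ∈ V, w v • v = x := by
    intro x hx
    rw [hhull, Finset.convexHull_eq] at hx
    obtain ⟨w, hw0, hw1, hwx⟩ := hx
    refine ⟨w, hw0, hw1, ?_⟩
    rw [← hwx, Finset.centerMass, hw1, inv_one, one_smul]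
    rfl
  have hinner : ∀ (cc : Vec d) (w : Vec d → ℝ), ⟪cc, ∑ v ∈ V, w v • v⟫ = ∑ v ∈ V, w v * ⟪cc, v⟫ := by
    intro cc w
    rw [inner_sum]
    exact Finset.sum_congr rfl fun v _ => real_inner_smul_right cc v (w v)
  -- min over V equals min over X
  have hminV : ∀ cc : Vec d, ∀ x ∈ X, V.inf' hVne (fun v => ⟪cc, v⟫) ≤ ⟪cc, x⟫ := by
    intro cc x hx
    obtain ⟨w, hw0, hw1, hwx⟩ := hcombo x hx
    rw [← hwx, hinner]
    calc V.inf' hVne (fun v => ⟪cc, v⟫) = ∑ v ∈ V, w v * V.inf' hVne (fun v => ⟪cc, v⟫) := by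
          rw [← Finset.sum_mul, hw1, one_mul]
      _ ≤ ∑ v ∈ V, w v * ⟪cc, v⟫ := by
          apply Finset.sum_le_sum
          intro v hv
          exact mul_le_mul_of_nonneg_left (Finset.inf'_le _ hv) (hw0 v hv)
  set μ := V.inf' hVne (fun v => ⟪c, v⟫) with hμ
  obtain ⟨v₀, hv₀V, hv₀⟩ := Finset.exists_mem_eq_inf' hVne (fun v => ⟪c, v⟫)
  -- bound R
  obtain ⟨R, hR⟩ := isBounded_iff_forall_norm_le.1 hbdd
  have hR0 : 0 ≤ R := le_trans (norm_nonneg _) (hR v₀ (hVX v₀ hv₀V))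
  -- gap
  set W := V.filter (fun v => ⟪c, v⟫ ≠ μ) with hW
  set g : ℝ := if h : W.Nonempty then W.inf' h (fun v => ⟪c, v⟫) - μ else 1 with hg
  have hg0 : 0 < g := by
    rw [hg]
    split_ifs with h
    · obtain ⟨u, huW, hu⟩ := Finset.exists_mem_eq_inf' h (fun v => ⟪c, v⟫)
      rw [hu]
      have huV : u ∈ V := (Finset.mem_filter.1 huW).1
      have := Finset.inf'_le (fun v => ⟪c, v⟫) huV
      rw [← hμ] at this
      have hne' : ⟪c, u⟫ ≠ μ := (Finset.mem_filter.1 huW).2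
      have : μ < ⟪c, u⟫ := lt_of_le_of_ne this (Ne.symm hne')
      linarith
    · norm_num
  have hgap : ∀ v ∈ V, ⟪c, v⟫ < μ + g → ⟪c, v⟫ = μ := by
    intro v hv hlt
    by_contra hne'
    have hvW : v ∈ W := Finset.mem_filter.2 ⟨hv, hne'⟩
    have hWne : W.Nonempty := ⟨v, hvW⟩
    rw [hg, dif_pos hWne] at hlt
    have := Finset.inf'_le (fun v => ⟪c, v⟫) hvW
    linarith
  refine ⟨g / (2 * R + 1), div_pos hg0 (by linarith), ?_⟩
  intro c' hc' x hx
  obtain ⟨hxX, hopt⟩ := hx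
  obtain ⟨w, hw0, hw1, hwx⟩ := hcombo x hxX
  set δ := g / (2 * R + 1) with hδ
  have hδ0 : 0 < δ := div_pos hg0 (by linarith)
  have hδg : δ * (2 * R) < g := by
    have : δ * (2 * R + 1) = g := by
      rw [hδ]; field_simp
    nlinarith
  -- Cauchy-Schwarz bound
  have hCS : ∀ v ∈ V, |⟪c, v⟫ - ⟪c', v⟫| ≤ δ * R := by
    intro v hv
    have h1 : ⟪c, v⟫ - ⟪c', v⟫ = ⟪c - c', v⟫ := (inner_sub_left c c' v).symm
    rw [h1]
    calc |⟪c - c', v⟫| ≤ ‖c - c'‖ * ‖v‖ := abs_real_inner_le_norm _ _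
      _ ≤ δ * R := by
          apply mul_le_mul _ (hR v (hVX v hv)) (norm_nonneg _) (le_of_lt hδ0)
          rw [← neg_sub]
          rw [norm_neg]
          exact le_of_lt hc'
  set μ' := V.inf' hVne (fun v => ⟪c', v⟫) with hμ'
  obtain ⟨v₀', hv₀'V, hv₀'⟩ := Finset.exists_mem_eq_inf' hVne (fun v => ⟪c', v⟫)
  have hxμ' : ⟪c', x⟫ = μ' := by
    have h1 : ⟪c', x⟫ ≤ μ' := by
      rw [hμ', hv₀']
      exact hopt v₀' (hVX v₀' hv₀'V)
    exact le_antisymm h1 (hminV c' x hxX)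
  -- each v with positive weight has c'-value μ'
  have hvopt : ∀ v ∈ V, w v ≠ 0 → ⟪c', v⟫ = μ' := by
    intro v hv hwv
    have hsum : ∑ v ∈ V, w v * (⟪c', v⟫ - μ') = 0 := by
      have he : ∑ v ∈ V, w v * (⟪c', v⟫ - μ') =
          (∑ v ∈ V, w v * ⟪c', v⟫) - (∑ v ∈ V, w v) * μ' := by
        rw [Finset.sum_mul, ← Finset.sum_sub_distrib]
        exact Finset.sum_congr rfl fun v _ => by ring
      rw [he, hw1, one_mul, ← hinner, hwx, hxμ', sub_self]
    have hterm := (Finset.sum_eq_zero_iff_of_nonneg (fun v hv =>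
      mul_nonneg (hw0 v hv) (by
        have := Finset.inf'_le (fun u => ⟪c', u⟫) hv
        rw [← hμ'] at this
        linarith))).1 hsum v hv
    rcases mul_eq_zero.1 hterm with h | h
    · exact absurd h hwv
    · linarith [sub_eq_zero.1 h]
  -- transfer optimality to c
  have hvoptc : ∀ v ∈ V, ⟪c', v⟫ = μ' → ⟪c, v⟫ = μ := by
    intro v hv hveq
    apply hgap v hv
    have h1 : ⟪c, v⟫ ≤ ⟪c', v⟫ + δ * R := by
      have := hCS v hv
      have := abs_le.1 this
      linarith [this.1]
    have h2 : ⟪c', v⟫ = μ' := hveq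
    have h3 : μ' ≤ ⟪c', v₀⟫ := by
      rw [hμ']
      exact Finset.inf'_le _ hv₀V
    have h4 : ⟪c', v₀⟫ ≤ ⟪c, v₀⟫ + δ * R := by
      have := hCS v₀ hv₀V
      have := abs_le.1 this
      linarith [this.2]
    have h5 : ⟪c, v₀⟫ = μ := hv₀.symm
    calc ⟪c, v⟫ ≤ μ + δ * R + δ * R := by linarith
      _ < μ + g := by nlinarith
  -- conclude
  have hxc : ⟪c, x⟫ = μ := by
    rw [← hwx, hinner]
    have : ∀ v ∈ V, w v * ⟪c, v⟫ = w v * μ := by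
      intro v hv
      by_cases hwv : w v = 0
      · rw [hwv, zero_mul, zero_mul]
      · rw [hvoptc v hv (hvopt v hv hwv)]
    rw [Finset.sum_congr rfl this, ← Finset.sum_mul, hw1, one_mul]
  refine ⟨hxX, fun y hy => ?_⟩
  rw [hxc]
  exact hminV c y hy

def obsMap {d r : ℕ} (q : Fin r → Vec d) : Vec d →ₗ[ℝ] EuclideanSpace ℝ (Fin r) where
  toFun c' := WithLp.toLp 2 (fun i => ⟪c', q i⟫)
  map_add' x y := by ext i; simp [inner_add_left]
  map_smul' s x := by ext i; simp [real_inner_smul_left]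

lemma obs_section {d r : ℕ} (q : Fin r → Vec d) :
    ∃ M : ℝ, 0 ≤ M ∧ ∀ y ∈ LinearMap.range (obsMap q),
      ∃ u : Vec d, obsMap q u = y ∧ ‖u‖ ≤ M * ‖y‖ := by
  set L := obsMap q
  have hsurj : Function.Surjective L.rangeRestrict := L.surjective_rangeRestrict
  obtain ⟨s, hs⟩ := L.rangeRestrict.exists_rightInverse_of_surjective
    (LinearMap.range_eq_top.2 hsurj)
  set sc := LinearMap.toContinuousLinearMap s
  refine ⟨‖sc‖, sc.opNorm_nonneg, fun y hy => ?_⟩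
  refine ⟨s ⟨y, hy⟩, ?_, ?_⟩
  · have h1 := LinearMap.congr_fun hs ⟨y, hy⟩
    have h2 : L.rangeRestrict (s ⟨y, hy⟩) = ⟨y, hy⟩ := h1
    have h3 : (L.rangeRestrict (s ⟨y, hy⟩) : EuclideanSpace ℝ (Fin r)) = y := by rw [h2]
    simpa using h3
  · have : ‖sc ⟨y, hy⟩‖ ≤ ‖sc‖ * ‖(⟨y, hy⟩ : LinearMap.range L)‖ := sc.le_opNorm _
    exact this


/-- noisy observations. With a sufficient dataset and noise of small
enough Euclidean norm, any least-squares estimate ĉ over 𝒞 yields only optimal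
decisions for the true cost c. -/
theorem stmt2 {d m r : ℕ} (A : Matrix (Fin m) (Fin d) ℝ) (b : Fin m → ℝ)
    (hne : (feasibleSet A b).Nonempty) (hbdd : Bornology.IsBounded (feasibleSet A b))
    (C : Set (Vec d)) (hCopen : IsOpen C)
    (q : Fin r → Vec d) (hsuff : SufficientDataset C (feasibleSet A b) q)
    (c : Vec d) (hc : c ∈ C) :
    ∃ κ > (0:ℝ), ∀ ε : EuclideanSpace ℝ (Fin r), ‖ε‖ < κ →
      ∀ chat ∈ C,
        (∀ c' ∈ C,
            ∑ i, (⟪chat, q i⟫ - (⟪c, q i⟫ + ε i)) ^ 2 ≤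
              ∑ i, (⟪c', q i⟫ - (⟪c, q i⟫ + ε i)) ^ 2) →
        argminSet (feasibleSet A b) chat ⊆ argminSet (feasibleSet A b) c := by

  obtain ⟨δ₀, hδ₀, hstab⟩ := stability A b hne hbdd c
  obtain ⟨δ₁, hδ₁, hball⟩ := Metric.isOpen_iff.1 hCopen c hc
  set δ := min δ₀ δ₁ with hδdef
  have hδ : 0 < δ := lt_min hδ₀ hδ₁
  obtain ⟨M, hM0, hMsec⟩ := obs_section q
  refine ⟨δ / (2 * M + 2), div_pos hδ (by linarith), ?_⟩
  intro ε hε chat hchatC hmin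
  set κ := δ / (2 * M + 2) with hκdef
  have hκ : 0 < κ := div_pos hδ (by linarith)
  -- least squares value bound
  have hfc : ∑ i, (⟪c, q i⟫ - (⟪c, q i⟫ + ε i)) ^ 2 = ∑ i, (ε i) ^ 2 :=
    Finset.sum_congr rfl fun i _ => by ring
  have hfchat := hmin c hc
  rw [hfc] at hfchat
  set y : EuclideanSpace ℝ (Fin r) := obsMap q chat - obsMap q c with hydef
  have h1 : ‖y - ε‖ ≤ ‖ε‖ := by
    rw [EuclideanSpace.norm_eq, EuclideanSpace.norm_eq]
    apply Real.sqrt_le_sqrt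
    calc ∑ i, ‖(y - ε) i‖ ^ 2
        = ∑ i, (⟪chat, q i⟫ - (⟪c, q i⟫ + ε i)) ^ 2 := by
          refine Finset.sum_congr rfl fun i _ => ?_
          have h2 : (y - ε) i = ⟪chat, q i⟫ - ⟪c, q i⟫ - ε i := by simp [hydef, obsMap]
          rw [h2, Real.norm_eq_abs, sq_abs]
          ring
      _ ≤ ∑ i, (ε i) ^ 2 := hfchat
      _ = ∑ i, ‖ε i‖ ^ 2 := Finset.sum_congr rfl fun i _ => by
          rw [Real.norm_eq_abs, sq_abs]
  have h2 : ‖y‖ ≤ 2 * ‖ε‖ := by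
    calc ‖y‖ = ‖(y - ε) + ε‖ := by rw [sub_add_cancel]
      _ ≤ ‖y - ε‖ + ‖ε‖ := norm_add_le _ _
      _ ≤ 2 * ‖ε‖ := by linarith
  have hyrange : y ∈ LinearMap.range (obsMap q) :=
    ⟨chat - c, by rw [map_sub]⟩
  obtain ⟨u, hu, hub⟩ := hMsec y hyrange
  have hu_small : ‖u‖ < δ := by
    have : ‖u‖ ≤ M * (2 * κ) := by
      calc ‖u‖ ≤ M * ‖y‖ := hub
        _ ≤ M * (2 * ‖ε‖) := mul_le_mul_of_nonneg_left h2 hM0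
        _ ≤ M * (2 * κ) := mul_le_mul_of_nonneg_left (by linarith) hM0
    have hκδ : κ * (2 * M + 2) = δ := by
      rw [hκdef]; field_simp
    nlinarith
  set c'' := c + u with hc''def
  have hdist : ‖c'' - c‖ < δ := by
    rw [hc''def, add_sub_cancel_left]
    exact hu_small
  have hc''C : c'' ∈ C := by
    apply hball
    rw [Metric.mem_ball, dist_eq_norm]
    exact lt_of_lt_of_le hdist (min_le_right _ _)
  have hsub : argminSet (feasibleSet A b) c'' ⊆ argminSet (feasibleSet A b) c :=
    hstab c'' (lt_of_lt_of_le hdist (min_le_left _ _))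
  have hLeq : obsMap q c'' = obsMap q chat := by
    rw [hc''def, map_add, hu, hydef]
    abel
  obtain ⟨Xhat, hXhat⟩ := hsuff
  have e1 := hXhat chat hchatC
  have e2 := hXhat c'' hc''C
  have hfun : (fun i => ⟪c'', q i⟫) = (fun i => ⟪chat, q i⟫) := by
    funext i
    exact congrArg (fun z => z i) hLeq
  have : argminSet (feasibleSet A b) chat = argminSet (feasibleSet A b) c'' := by
    rw [← e1, ← hfun, e2]
  rw [this]
  exact hsub
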